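/- arXiv:2308.01896 — 4 statements merged into one kernel-verified Lean document; each statement's English description precedes it below -/
import Mathlib

section
/- Let q ∈ [1,∞) and let p = (p(j))_{j≥1} be a nonincreasing sequence with p(j) ∈ [0,1/2] and p(j) → 0. Then lim_{n→∞} E‖p̂_n − p‖_q = 0 if and only if ∑_{j≥1} p(j) < ∞. Moreover, if ∑_{j≥1} p(j) = ∞, then ‖p̂_n − p‖_q = ∞ almost surely. -/
open MeasureTheory ProbabilityTheory Filter ENNReal

/-- The sequence `p : ℕ → ℝ` (Lean index `j` corresponds to the paper's index `j+1`)
represents a nonincreasing sequence of probabilities in `[0,1/2]` tending to `0`. -/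
def IsProbSeq (p : ℕ → ℝ) : Prop :=
  (∀ j, p j ∈ Set.Icc (0 : ℝ) (1 / 2)) ∧ Antitone p ∧ Tendsto p atTop (nhds 0)

/-- `X i j` is the `j`-th coordinate of the `i`-th sample; the samples follow the product
Bernoulli distribution with parameters `p`. -/
def IsBernoulliProduct {Ω : Type} [MeasurableSpace Ω] (P : Measure Ω)
    (X : ℕ → ℕ → Ω → ℝ) (p : ℕ → ℝ) : Prop :=
  (∀ i j, Measurable (X i j)) ∧
  (∀ i j ω, X i j ω = 0 ∨ X i j ω = 1) ∧
  (∀ i j, P {ω | X i j ω = 1} = ENNReal.ofReal (p j)) ∧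
  iIndepFun (fun ij : ℕ × ℕ => X ij.1 ij.2) P

/-- Empirical mean of coordinate `j` over the first `n` samples. -/
noncomputable def empMean (n : ℕ) {Ω : Type} (X : ℕ → ℕ → Ω → ℝ) (j : ℕ) (ω : Ω) : ℝ :=
  (∑ i ∈ Finset.range n, X i j ω) / n

/-- The `ℓ^q` norm `‖p̂_n - p‖_q = (∑_{j≥1} |p̂_n(j) - p(j)|^q)^{1/q}`, valued in `ℝ≥0∞`
(it is equal to `∞` exactly when the series diverges). -/
noncomputable def lqDev (q : ℝ) (n : ℕ) {Ω : Type} (X : ℕ → ℕ → Ω → ℝ) (p : ℕ → ℝ)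
    (ω : Ω) : ℝ≥0∞ :=
  (∑' j, ENNReal.ofReal (|empMean n X j ω - p j| ^ q)) ^ (1 / q)

/-!
If `∑ p j < ∞`: since `q ≥ 1` we have `‖x‖_q ≤ ‖x‖_1`, and each coordinate satisfies
`E|p̂_n(j) - p(j)| ≤ min (2 p(j)) √(p(j) / n)`, the second bound coming from the variance
`Var p̂_n(j) ≤ p(j) / n`. Dominated convergence over the coordinates, with the summable bound
`2 p`, gives `E‖p̂_n - p‖_q → 0`.

If `∑ p j = ∞`: by the second Borel–Cantelli lemma, almost surely the first sample equals `1` in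
infinitely many coordinates. As `p j → 0`, all but finitely many of these have
`p̂_n(j) - p(j) ≥ 1/n - p(j) ≥ 1/(2n)`, so the series defining `‖p̂_n - p‖_q` diverges. Hence
`E‖p̂_n - p‖_q = ∞` for every `n ≥ 1`, and it cannot tend to `0`.
-/

open Topology

lemma ENNReal.tsum_rpow_le_rpow_tsum {ι : Type*} {q : ℝ} (hq : 1 ≤ q) (b : ι → ℝ≥0∞) :
    ∑' i, b i ^ q ≤ (∑' i, b i) ^ q := by
  have hsplit : ∀ x : ℝ≥0∞, x ^ q = x ^ (q - 1) * x := fun x => by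
    conv_lhs => rw [show q = (q - 1) + 1 by ring]
    rw [rpow_add_of_nonneg _ _ (by linarith) zero_le_one, rpow_one]
  calc ∑' i, b i ^ q = ∑' i, (b i ^ (q - 1)) * b i := by simp_rw [hsplit]
    _ ≤ ∑' i, (∑' k, b k) ^ (q - 1) * b i := by
      gcongr with i
      exact ENNReal.le_tsum i
    _ = (∑' i, b i) ^ q := by rw [ENNReal.tsum_mul_left, ← hsplit]

lemma ENNReal.tsum_eq_top_of_frequently_const_le {f : ℕ → ℝ≥0∞} {c : ℝ≥0∞} (hc : c ≠ 0)
    (h : ∃ᶠ j in atTop, c ≤ f j) : ∑' j, f j = ∞ := by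
  by_contra hne
  exact Nat.frequently_atTop_iff_infinite.1 h (ENNReal.finite_const_le_of_tsum_ne_top hne hc)

lemma lintegral_enorm_sub_integral_le_evariance_rpow {Ω : Type*} [MeasurableSpace Ω]
    {μ : Measure Ω} [IsProbabilityMeasure μ] {Y : Ω → ℝ} (hY : AEStronglyMeasurable Y μ) :
    ∫⁻ ω, ‖Y ω - μ[Y]‖ₑ ∂μ ≤ evariance Y μ ^ (1 / 2 : ℝ) := by
  have h := eLpNorm_le_eLpNorm_of_exponent_le (f := fun ω => Y ω - μ[Y]) one_le_two
    (hY.sub aestronglyMeasurable_const)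
  rw [eLpNorm_one_eq_lintegral_enorm,
    eLpNorm_eq_lintegral_rpow_enorm_toReal two_ne_zero ofNat_ne_top] at h
  simpa [evariance] using h

section EmpiricalMean

variable {Ω : Type} {X : ℕ → ℕ → Ω → ℝ} {p : ℕ → ℝ} {n : ℕ} {j : ℕ}

lemma empMean_eq_smul_sum (n : ℕ) (X : ℕ → ℕ → Ω → ℝ) (j : ℕ) :
    empMean n X j = (n : ℝ)⁻¹ • ∑ i ∈ Finset.range n, X i j := by
  funext ω
  simp [empMean, Finset.sum_apply, div_eq_inv_mul]

lemma inv_le_empMean {ω : Ω} (hX : ∀ i, 0 ≤ X i j ω) {i : ℕ} (hi : i < n) (h : X i j ω = 1) :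
    (n : ℝ)⁻¹ ≤ empMean n X j ω := by
  have : X i j ω ≤ ∑ i ∈ Finset.range n, X i j ω :=
    Finset.single_le_sum (fun i _ => hX i) (Finset.mem_range.2 hi)
  rw [empMean, ← one_div, ← h]
  gcongr

lemma lqDev_le_tsum_enorm {q : ℝ} (hq : 1 ≤ q) (n : ℕ) (X : ℕ → ℕ → Ω → ℝ) (p : ℕ → ℝ)
    (ω : Ω) : lqDev q n X p ω ≤ ∑' j, ‖empMean n X j ω - p j‖ₑ := by
  have hq0 : 0 < q := by linarith
  have hpow : ∀ x : ℝ, ENNReal.ofReal (|x| ^ q) = ‖x‖ₑ ^ q := fun x => by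
    rw [Real.enorm_eq_ofReal_abs, ofReal_rpow_of_nonneg (abs_nonneg x) hq0.le]
  calc lqDev q n X p ω = (∑' j, ‖empMean n X j ω - p j‖ₑ ^ q) ^ (1 / q) := by
        simp only [lqDev, hpow]
    _ ≤ ((∑' j, ‖empMean n X j ω - p j‖ₑ) ^ q) ^ (1 / q) := by
        gcongr
        exact ENNReal.tsum_rpow_le_rpow_tsum hq _
    _ = ∑' j, ‖empMean n X j ω - p j‖ₑ := by
        rw [← rpow_mul, mul_one_div_cancel hq0.ne', rpow_one]

lemma lqDev_eq_top_of_frequently {q : ℝ} (hq : 0 < q) (hp : Tendsto p atTop (𝓝 0)) {ω : Ω}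
    (hX : ∀ i j, 0 ≤ X i j ω) {i : ℕ} (hi : i < n) (h : ∃ᶠ j in atTop, X i j ω = 1) :
    lqDev q n X p ω = ⊤ := by
  have hn : (0 : ℝ) < n := by exact_mod_cast (Nat.zero_le i).trans_lt hi
  have hfar : ∃ᶠ j in atTop, (2 * (n : ℝ))⁻¹ ≤ |empMean n X j ω - p j| := by
    have hhalf : (2 * (n : ℝ))⁻¹ + (2 * (n : ℝ))⁻¹ = (n : ℝ)⁻¹ := by field_simp; ring
    have hsmall : ∀ᶠ j in atTop, p j < (2 * (n : ℝ))⁻¹ :=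
      hp.eventually (gt_mem_nhds (by positivity))
    refine (h.and_eventually hsmall).mono ?_
    rintro j ⟨hj, hpj⟩
    have := inv_le_empMean (hX · j) hi hj
    exact le_abs.2 (Or.inl (by linarith))
  have htop : ∑' j, ENNReal.ofReal (|empMean n X j ω - p j| ^ q) = ⊤ := by
    refine ENNReal.tsum_eq_top_of_frequently_const_le (c := ENNReal.ofReal ((2 * (n : ℝ))⁻¹ ^ q))
      (by positivity) (hfar.mono fun j hj => ?_)
    gcongr
  rw [lqDev, htop, top_rpow_of_pos (by positivity)]

end EmpiricalMean

namespace IsBernoulliProduct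

variable {Ω : Type} [MeasurableSpace Ω] {P : Measure Ω} {X : ℕ → ℕ → Ω → ℝ} {p : ℕ → ℝ}
  {n j : ℕ}

lemma nonneg (hX : IsBernoulliProduct P X p) (i j : ℕ) (ω : Ω) : 0 ≤ X i j ω := by
  rcases hX.2.1 i j ω with h | h <;> simp [h]

lemma eq_indicator (hX : IsBernoulliProduct P X p) (i j : ℕ) :
    X i j = {ω | X i j ω = 1}.indicator 1 := by
  funext ω
  rcases hX.2.1 i j ω with h | h <;> simp [h]

lemma measurableSet_eq_one (hX : IsBernoulliProduct P X p) (i j : ℕ) :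
    MeasurableSet {ω | X i j ω = 1} :=
  hX.1 i j (measurableSet_singleton 1)

lemma integral_eq (hX : IsBernoulliProduct P X p) (hp : 0 ≤ p j) (i : ℕ) : P[X i j] = p j := by
  rw [hX.eq_indicator i j, integral_indicator_one (hX.measurableSet_eq_one i j), measureReal_def,
    hX.2.2.1 i j, toReal_ofReal hp]

lemma iIndepSet_eq_one (hX : IsBernoulliProduct P X p) (i : ℕ) :
    iIndepSet (fun j => {ω | X i j ω = 1}) P := by
  rw [iIndepSet_iff_meas_biInter (hX.measurableSet_eq_one i)]
  intro S
  exact (hX.2.2.2.precomp (Prod.mk_right_injective i)).measure_inter_preimage_eq_mul S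
    (sets := fun _ => {1}) fun _ _ => measurableSet_singleton 1

variable [IsProbabilityMeasure P]

lemma memLp (hX : IsBernoulliProduct P X p) (i j : ℕ) : MemLp (X i j) 2 P := by
  rw [hX.eq_indicator i j]
  exact memLp_indicator_const 2 (hX.measurableSet_eq_one i j) 1 (Or.inr (measure_ne_top _ _))

lemma variance_le (hX : IsBernoulliProduct P X p) (hp : 0 ≤ p j) (i : ℕ) :
    Var[X i j; P] ≤ p j := by
  have hsq : X i j ^ 2 = X i j := by
    funext ω
    rcases hX.2.1 i j ω with h | h <;> simp [h]
  calc Var[X i j; P] ≤ P[X i j ^ 2] := variance_le_expectation_sq (hX.1 i j).aestronglyMeasurable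
    _ = p j := by rw [hsq, hX.integral_eq hp]

lemma memLp_empMean (hX : IsBernoulliProduct P X p) (n j : ℕ) : MemLp (empMean n X j) 2 P := by
  rw [empMean_eq_smul_sum]
  exact (memLp_finsetSum' _ fun i _ => hX.memLp i j).const_smul _

lemma integral_empMean (hX : IsBernoulliProduct P X p) (hp : 0 ≤ p j) (hn : n ≠ 0) :
    P[empMean n X j] = p j := by
  rw [empMean_eq_smul_sum]
  simp only [Pi.smul_apply, Finset.sum_apply]
  rw [integral_smul, integral_finsetSum _ fun i _ =>
    (hX.memLp i j).integrable one_le_two]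
  simp only [hX.integral_eq hp, Finset.sum_const, Finset.card_range, nsmul_eq_mul, smul_eq_mul]
  field_simp

lemma variance_empMean_le (hX : IsBernoulliProduct P X p) (hp : 0 ≤ p j) (hn : n ≠ 0) :
    Var[empMean n X j; P] ≤ p j / n := by
  have hsum : Var[∑ i ∈ Finset.range n, X i j; P] = ∑ i ∈ Finset.range n, Var[X i j; P] :=
    IndepFun.variance_sum (fun i _ => hX.memLp i j) fun i _ k _ hik =>
      hX.2.2.2.indepFun (i := (i, j)) (j := (k, j)) (by simpa using hik)
  calc Var[empMean n X j; P] = (n : ℝ)⁻¹ ^ 2 * ∑ i ∈ Finset.range n, Var[X i j; P] := by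
        rw [empMean_eq_smul_sum, variance_smul, hsum]
    _ ≤ (n : ℝ)⁻¹ ^ 2 * ∑ i ∈ Finset.range n, p j := by
        gcongr with i
        exact hX.variance_le hp i
    _ = p j / n := by
        simp only [Finset.sum_const, Finset.card_range, nsmul_eq_mul]
        field_simp

lemma lintegral_enorm_empMean_sub_le_sqrt (hX : IsBernoulliProduct P X p) (hp : 0 ≤ p j)
    (hn : n ≠ 0) : ∫⁻ ω, ‖empMean n X j ω - p j‖ₑ ∂P ≤ ENNReal.ofReal √(p j / n) := by
  have hL2 := hX.memLp_empMean n j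
  calc ∫⁻ ω, ‖empMean n X j ω - p j‖ₑ ∂P ≤ evariance (empMean n X j) P ^ (1 / 2 : ℝ) := by
        simpa only [hX.integral_empMean hp hn] using
          lintegral_enorm_sub_integral_le_evariance_rpow hL2.aestronglyMeasurable
    _ = ENNReal.ofReal Var[empMean n X j; P] ^ (1 / 2 : ℝ) := by rw [hL2.ofReal_variance_eq]
    _ ≤ ENNReal.ofReal (p j / n) ^ (1 / 2 : ℝ) := by
        gcongr
        exact hX.variance_empMean_le hp hn
    _ = ENNReal.ofReal √(p j / n) := by
        rw [ofReal_rpow_of_nonneg (by positivity) (by norm_num), Real.sqrt_eq_rpow]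

lemma lintegral_enorm_empMean_sub_le_two_mul (hX : IsBernoulliProduct P X p) (hp : 0 ≤ p j)
    (hn : n ≠ 0) : ∫⁻ ω, ‖empMean n X j ω - p j‖ₑ ∂P ≤ ENNReal.ofReal (2 * p j) := by
  have hmean : ∫⁻ ω, ‖empMean n X j ω‖ₑ ∂P = ENNReal.ofReal (p j) := by
    have hnonneg : ∀ ω, 0 ≤ empMean n X j ω := fun ω =>
      div_nonneg (Finset.sum_nonneg fun i _ => hX.nonneg i j ω) n.cast_nonneg
    simp_rw [Real.enorm_of_nonneg (hnonneg _)]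
    rw [← ofReal_integral_eq_lintegral_ofReal ((hX.memLp_empMean n j).integrable one_le_two)
      (ae_of_all _ hnonneg), hX.integral_empMean hp hn]
  calc ∫⁻ ω, ‖empMean n X j ω - p j‖ₑ ∂P ≤ ∫⁻ ω, ‖empMean n X j ω‖ₑ + ‖p j‖ₑ ∂P :=
        lintegral_mono fun ω => enorm_sub_le
    _ = ENNReal.ofReal (2 * p j) := by
        rw [lintegral_add_right _ measurable_const, lintegral_const, measure_univ, mul_one, hmean,
          Real.enorm_of_nonneg hp, ← ofReal_add hp hp, two_mul]

lemma tendsto_lintegral_enorm_empMean_sub (hX : IsBernoulliProduct P X p) (hp : 0 ≤ p j) :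
    Tendsto (fun n => ∫⁻ ω, ‖empMean n X j ω - p j‖ₑ ∂P) atTop (𝓝 0) := by
  have hsqrt : Tendsto (fun n : ℕ => ENNReal.ofReal √(p j / n)) atTop (𝓝 0) := by
    simpa using ENNReal.tendsto_ofReal (tendsto_const_div_atTop_nhds_zero_nat (p j)).sqrt
  refine tendsto_of_tendsto_of_tendsto_of_le_of_le' tendsto_const_nhds hsqrt
    (Eventually.of_forall fun n => zero_le) ?_
  filter_upwards [eventually_ne_atTop 0] with n hn
  exact hX.lintegral_enorm_empMean_sub_le_sqrt hp hn

lemma tendsto_lintegral_lqDev (hX : IsBernoulliProduct P X p) {q : ℝ} (hq : 1 ≤ q)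
    (hp : ∀ j, 0 ≤ p j) (hs : Summable p) :
    Tendsto (fun n => ∫⁻ ω, lqDev q n X p ω ∂P) atTop (𝓝 0) := by
  have hle : ∀ n, ∫⁻ ω, lqDev q n X p ω ∂P ≤ ∑' j, ∫⁻ ω, ‖empMean n X j ω - p j‖ₑ ∂P := by
    intro n
    calc ∫⁻ ω, lqDev q n X p ω ∂P ≤ ∫⁻ ω, ∑' j, ‖empMean n X j ω - p j‖ₑ ∂P :=
          lintegral_mono fun ω => lqDev_le_tsum_enorm hq n X p ω
      _ = ∑' j, ∫⁻ ω, ‖empMean n X j ω - p j‖ₑ ∂P :=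
          lintegral_tsum fun j => ((hX.memLp_empMean n j).aestronglyMeasurable.sub
            aestronglyMeasurable_const).enorm
  have hsum : Tendsto (fun n => ∑' j, ∫⁻ ω, ‖empMean n X j ω - p j‖ₑ ∂P) atTop (𝓝 0) := by
    simpa [lintegral_count] using tendsto_lintegral_filter_of_dominated_convergence
      (μ := Measure.count) (fun j => ENNReal.ofReal (2 * p j))
      (Eventually.of_forall fun n => measurable_of_countable _)
      ((eventually_ne_atTop 0).mono fun n hn =>
        ae_of_all _ fun j => hX.lintegral_enorm_empMean_sub_le_two_mul (hp j) hn)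
      (by
        rw [lintegral_count, ← ofReal_tsum_of_nonneg (fun j => by linarith [hp j])
          (hs.mul_left 2)]
        exact ofReal_ne_top)
      (ae_of_all _ fun j => hX.tendsto_lintegral_enorm_empMean_sub (hp j))
  exact tendsto_of_tendsto_of_tendsto_of_le_of_le tendsto_const_nhds hsum
    (fun n => zero_le) hle

lemma ae_frequently_eq_one (hX : IsBernoulliProduct P X p) (hp : ∀ j, 0 ≤ p j)
    (hs : ¬ Summable p) (i : ℕ) : ∀ᵐ ω ∂P, ∃ᶠ j in atTop, X i j ω = 1 := by
  have hdiv : ∑' j, P {ω | X i j ω = 1} = ∞ := by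
    by_contra hne
    refine hs ((ENNReal.summable_toReal hne).congr fun j => ?_)
    rw [hX.2.2.1 i j, toReal_ofReal (hp j)]
  have hlimsup := measure_limsup_eq_one (hX.measurableSet_eq_one i) (hX.iIndepSet_eq_one i) hdiv
  rw [← measure_univ (μ := P)] at hlimsup
  filter_upwards [(ae_mem_iff_measure_eq (MeasurableSet.measurableSet_limsup
    (hX.measurableSet_eq_one i)).nullMeasurableSet).2 hlimsup] with ω hω
  exact (mem_limsup_iff_frequently_mem (s := fun j => {ω | X i j ω = 1})).1 hω

lemma ae_lqDev_eq_top (hX : IsBernoulliProduct P X p) {q : ℝ} (hq : 0 < q)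
    (hp : ∀ j, 0 ≤ p j) (hp0 : Tendsto p atTop (𝓝 0)) (hs : ¬ Summable p) (hn : n ≠ 0) :
    ∀ᵐ ω ∂P, lqDev q n X p ω = ⊤ := by
  filter_upwards [hX.ae_frequently_eq_one hp hs 0] with ω hω
  exact lqDev_eq_top_of_frequently hq hp0 (fun i j => hX.nonneg i j ω) (Nat.pos_of_ne_zero hn) hω

end IsBernoulliProduct

theorem stmt8 (q : ℝ) (hq : 1 ≤ q) (p : ℕ → ℝ) (hp : IsProbSeq p)
    (Ω : Type) [MeasurableSpace Ω] (P : Measure Ω) [IsProbabilityMeasure P]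
    (X : ℕ → ℕ → Ω → ℝ) (hX : IsBernoulliProduct P X p) :
    -- E‖p̂_n - p‖_q → 0 if and only if ∑_j p(j) < ∞
    (Tendsto (fun n : ℕ => ∫⁻ ω, lqDev q n X p ω ∂P) atTop (nhds 0) ↔ Summable p) ∧
    -- moreover, if ∑_j p(j) = ∞ then ‖p̂_n - p‖_q = ∞ almost surely
    (¬ Summable p → ∀ n : ℕ, 1 ≤ n → ∀ᵐ ω ∂P, lqDev q n X p ω = ⊤) := by
  have hp0 : ∀ j, 0 ≤ p j := fun j => (hp.1 j).1
  have h_top : ¬ Summable p → ∀ n : ℕ, 1 ≤ n → ∀ᵐ ω ∂P, lqDev q n X p ω = ⊤ :=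
    fun hs n hn => hX.ae_lqDev_eq_top (by linarith) hp0 hp.2.2 hs (by omega)
  refine ⟨⟨fun hlim => ?_, hX.tendsto_lintegral_lqDev hq hp0⟩, h_top⟩
  by_contra hs
  have h_int_top : ∀ᶠ n in atTop, ⊤ = ∫⁻ ω, lqDev q n X p ω ∂P := by
    filter_upwards [eventually_ge_atTop 1] with n hn
    rw [lintegral_congr_ae (h_top hs n hn), lintegral_const, measure_univ, mul_one]
  exact top_ne_zero (tendsto_nhds_unique (tendsto_const_nhds.congr' h_int_top) hlim)
end

section
/- There exist universal constants c, C > 0 such that for every integer n ≥ 1 and every nonincreasing sequence p = (p(j))_{j≥1} with p(j) ∈ [0,1/2] and p(j) → 0, if p(j) ≤ 1/(2nj) for all j ≥ 1, then c · min(1/n, ∑_{j≥1} p(j)) ≤ Δ_n^+(p) ≤ C · min(1/n, ∑_{j≥1} p(j)). -/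
open MeasureTheory ProbabilityTheory Filter ENNReal

/-- `Δ_n^+(p) = E sup_j [p̂_n(j) - p(j)]₊`. -/
noncomputable def maxDevPlus (n : ℕ) {Ω : Type} [MeasurableSpace Ω] (P : Measure Ω)
    (X : ℕ → ℕ → Ω → ℝ) (p : ℕ → ℝ) : ℝ :=
  ∫ ω, (⨆ j, max (empMean n X j ω - p j) 0) ∂P

/-! Write `S j` for the number of successes among the first `n` samples in coordinate `j`.
Then `Δ_n^+(p) ≤ E[max_j S j] / n = (1/n) ∑_{k=1}^n P(∃ j, k ≤ S j)`, and the union bound with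
`P(k ≤ S j) ≤ (n p(j))^k`, where `n p(j) ≤ 1/(2(j+1))`, makes these probabilities decay
geometrically in `k` from `min(1, n ∑ p)`.
Conversely, cut the series at the first `J` whose partial sum `s` exceeds half of
`min(1/n, ∑ p)`, so that `s ≤ 1/n`. With probability
`1 - ∏ (1 - p(j))^n ≥ 1 - 1/(1 + ns) ≥ ns/2` some `X_i(j)` with `i < n`, `j < J` equals one,
and this forces a deviation `1/n - p(j) ≥ 1/(2n)`. -/

open Finset

lemma ENNReal.exists_sum_range_mem_Ioc {f : ℕ → ℝ≥0∞} {t δ : ℝ≥0∞} (hf : ∀ j, f j ≤ δ)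
    (ht : t < ∑' j, f j) : ∃ J, t < ∑ j ∈ range J, f j ∧ ∑ j ∈ range J, f j ≤ t + δ := by
  classical
  have hex : ∃ J, t < ∑ j ∈ range J, f j := by
    simpa [ENNReal.tsum_eq_iSup_nat, lt_iSup_iff] using ht
  obtain ⟨J, hJ⟩ : ∃ J, Nat.find hex = J + 1 :=
    Nat.exists_eq_add_one.mpr (Nat.pos_of_ne_zero fun h => by simpa [h] using Nat.find_spec hex)
  refine ⟨J + 1, hJ ▸ Nat.find_spec hex, ?_⟩
  rw [sum_range_succ]
  exact add_le_add (not_lt.mp (Nat.find_min hex (by omega))) (hf J)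

lemma prod_one_sub_le_inv_one_add_sum {ι : Type*} (s : Finset ι) {a : ι → ℝ}
    (ha₀ : ∀ i ∈ s, 0 ≤ a i) (ha₁ : ∀ i ∈ s, a i ≤ 1) :
    ∏ i ∈ s, (1 - a i) ≤ (1 + ∑ i ∈ s, a i)⁻¹ := by
  have hsum : 0 ≤ ∑ i ∈ s, a i := sum_nonneg ha₀
  calc ∏ i ∈ s, (1 - a i) ≤ ∏ i ∈ s, Real.exp (-a i) :=
        prod_le_prod (fun i hi => by linarith [ha₁ i hi]) fun i _ => Real.one_sub_le_exp_neg _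
    _ = (Real.exp (∑ i ∈ s, a i))⁻¹ := by rw [← Real.exp_sum, ← Real.exp_neg, sum_neg_distrib]
    _ ≤ (1 + ∑ i ∈ s, a i)⁻¹ := by
        gcongr
        linarith [Real.add_one_le_exp (∑ i ∈ s, a i)]

lemma tsum_inv_two_mul_succ_sq_le :
    ∑' j : ℕ, ENNReal.ofReal (1 / (2 * (j + 1))) ^ 2 ≤ 2⁻¹ := by
  have hsum : HasSum (fun j : ℕ => 1 / ((j : ℝ) + 1) ^ 2) (Real.pi ^ 2 / 6) := by
    simpa using (hasSum_nat_add_iff' 1).mpr hasSum_zeta_two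
  have hsq : ∀ j : ℕ, ENNReal.ofReal (1 / (2 * (j + 1))) ^ 2
      = ENNReal.ofReal (4⁻¹ * (1 / ((j : ℝ) + 1) ^ 2)) := fun j => by
    rw [← ENNReal.ofReal_pow (by positivity)]
    congr 1
    field_simp
    ring
  rw [tsum_congr hsq, ← ENNReal.ofReal_tsum_of_nonneg (fun j => by positivity)
    (hsum.summable.mul_left _), tsum_mul_left, hsum.tsum_eq, ← ENNReal.ofReal_ofNat 2,
    ← ENNReal.ofReal_inv_of_pos two_pos]
  refine ENNReal.ofReal_le_ofReal ?_
  nlinarith [Real.pi_lt_d2, Real.pi_pos]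

lemma natCast_mul_le_one_div_two_mul_succ {n j : ℕ} {x : ℝ} (hx : x ≤ 1 / (2 * n * (j + 1))) :
    n * x ≤ 1 / (2 * (j + 1)) := by
  rcases eq_or_ne n 0 with rfl | hn
  · simp only [CharP.cast_eq_zero, zero_mul]; positivity
  calc (n : ℝ) * x ≤ n * (1 / (2 * n * (j + 1))) := by gcongr
    _ = 1 / (2 * (j + 1)) := by field_simp

lemma tsum_pow_succ_le {a : ℕ → ℝ≥0∞} (ha : ∀ j, a j ≤ 2⁻¹) (ha2 : ∑' j, a j ^ 2 ≤ 2⁻¹)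
    (k : ℕ) : 1 ⊓ ∑' j, a j ^ (k + 1) ≤ 2⁻¹ ^ k * (1 ⊓ ∑' j, a j) := by
  rcases k with _ | k
  · simp
  have hsq : ∑' j, a j ^ 2 ≤ 2⁻¹ * (1 ⊓ ∑' j, a j) := by
    refine mul_min (2⁻¹ : ℝ≥0∞) 1 _ ▸ le_min (by simpa using ha2) ?_
    rw [← ENNReal.tsum_mul_left]
    exact ENNReal.tsum_le_tsum fun j => by rw [sq]; exact mul_le_mul_left (ha j) _
  calc 1 ⊓ ∑' j, a j ^ (k + 1 + 1) ≤ ∑' j, 2⁻¹ ^ k * a j ^ 2 :=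
        inf_le_right.trans <| ENNReal.tsum_le_tsum fun j => by
          rw [show k + 1 + 1 = k + 2 by rfl, pow_add]
          exact mul_le_mul_left (pow_le_pow_left' (ha j) k) _
    _ ≤ 2⁻¹ ^ (k + 1) * (1 ⊓ ∑' j, a j) := by
        rw [ENNReal.tsum_mul_left, pow_succ, mul_assoc]
        exact mul_le_mul_right hsq _

section Bernoulli

variable {Ω : Type} [MeasurableSpace Ω] {P : Measure Ω}

lemma ProbabilityTheory.iIndepFun.measure_biInter_eq {ι : Type*} {Y : ι → Ω → ℝ}
    (hY : iIndepFun Y P) (s : Finset ι) (c : ℝ) :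
    P (⋂ i ∈ s, {ω | Y i ω = c}) = ∏ i ∈ s, P {ω | Y i ω = c} :=
  hY.meas_biInter fun _ _ => ⟨{c}, measurableSet_singleton c, rfl⟩

lemma sum_eq_card_filter_eq_one {ι : Type*} {y : ι → ℝ} (hy : ∀ i, y i = 0 ∨ y i = 1)
    (s : Finset ι) : ∑ i ∈ s, y i = #{i ∈ s | y i = 1} := by
  classical
  rw [← sum_boole]
  exact sum_congr rfl fun i _ => by rcases hy i with h | h <;> simp [h]

lemma measure_natCast_le_sum_le_pow {Y : ℕ → Ω → ℝ} (hY : iIndepFun Y P)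
    (h01 : ∀ i ω, Y i ω = 0 ∨ Y i ω = 1) {q : ℝ≥0∞} (hq : ∀ i, P {ω | Y i ω = 1} = q)
    (n k : ℕ) : P {ω | (k : ℝ) ≤ ∑ i ∈ range n, Y i ω} ≤ (n * q) ^ k := by
  classical
  have hsub : {ω | (k : ℝ) ≤ ∑ i ∈ range n, Y i ω}
      ⊆ ⋃ A ∈ powersetCard k (range n), ⋂ i ∈ A, {ω | Y i ω = 1} := by
    intro ω (hω : (k : ℝ) ≤ ∑ i ∈ range n, Y i ω)
    rw [sum_eq_card_filter_eq_one (fun i => h01 i ω), Nat.cast_le] at hω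
    obtain ⟨A, hA, rfl⟩ := exists_subset_card_eq hω
    refine Set.mem_biUnion (mem_powersetCard.2 ⟨hA.trans (filter_subset _ _), rfl⟩) ?_
    exact Set.mem_iInter₂.2 fun i hi => (mem_filter.1 (hA hi)).2
  calc P {ω | (k : ℝ) ≤ ∑ i ∈ range n, Y i ω}
      ≤ ∑ A ∈ powersetCard k (range n), P (⋂ i ∈ A, {ω | Y i ω = 1}) :=
        (measure_mono hsub).trans (measure_biUnion_finset_le _ _)
    _ = (n.choose k : ℝ≥0∞) * q ^ k := by
        rw [sum_congr rfl fun A hA => by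
          rw [hY.measure_biInter_eq, prod_congr rfl fun i _ => hq i, prod_const,
            (mem_powersetCard.1 hA).2], sum_const, card_powersetCard, card_range, nsmul_eq_mul]
    _ ≤ (n * q) ^ k := by
        rw [mul_pow]
        gcongr
        exact_mod_cast Nat.choose_le_pow n k

namespace IsBernoulliProduct

variable {X : ℕ → ℕ → Ω → ℝ} {p : ℕ → ℝ}

lemma measurable (hX : IsBernoulliProduct P X p) (i j : ℕ) : Measurable (X i j) := hX.1 i j

lemma zero_or_one (hX : IsBernoulliProduct P X p) (i j : ℕ) (ω : Ω) :
    X i j ω = 0 ∨ X i j ω = 1 :=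
  hX.2.1 i j ω

lemma measure_eq_one (hX : IsBernoulliProduct P X p) (i j : ℕ) :
    P {ω | X i j ω = 1} = ENNReal.ofReal (p j) :=
  hX.2.2.1 i j

lemma iIndepFun_uncurry (hX : IsBernoulliProduct P X p) :
    iIndepFun (fun ij : ℕ × ℕ => X ij.1 ij.2) P :=
  hX.2.2.2

lemma iIndepFun_column (hX : IsBernoulliProduct P X p) (j : ℕ) : iIndepFun (fun i => X i j) P :=
  hX.iIndepFun_uncurry.precomp (Prod.mk_left_injective j)

lemma measure_eq_zero [IsProbabilityMeasure P] (hX : IsBernoulliProduct P X p)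
    (hp : ∀ j, 0 ≤ p j) (i j : ℕ) :
    P {ω | X i j ω = 0} = ENNReal.ofReal (1 - p j) := by
  have hc : {ω | X i j ω = 0} = {ω | X i j ω = 1}ᶜ := by
    ext ω
    rcases hX.zero_or_one i j ω with h | h <;> simp [h]
  have hm : MeasurableSet {ω | X i j ω = 1} := hX.measurable i j (measurableSet_singleton 1)
  rw [hc, prob_compl_eq_one_sub hm, hX.measure_eq_one, ENNReal.ofReal_sub _ (hp j),
    ENNReal.ofReal_one]

end IsBernoulliProduct

end Bernoulli

noncomputable def supPosDev (n : ℕ) {Ω : Type} (X : ℕ → ℕ → Ω → ℝ) (p : ℕ → ℝ) (ω : Ω) : ℝ :=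
  ⨆ j, max (empMean n X j ω - p j) 0

def countAtLeast (n : ℕ) {Ω : Type} (X : ℕ → ℕ → Ω → ℝ) (k : ℕ) : Set Ω :=
  ⋃ j, {ω | (k : ℝ) ≤ ∑ i ∈ range n, X i j ω}

section Pointwise

variable {Ω : Type} {X : ℕ → ℕ → Ω → ℝ} {p : ℕ → ℝ} {n : ℕ}

lemma empMean_le_one (h01 : ∀ i j ω, X i j ω = 0 ∨ X i j ω = 1) (j : ℕ) (ω : Ω) :
    empMean n X j ω ≤ 1 := by
  rw [empMean, sum_eq_card_filter_eq_one fun i => h01 i j ω]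
  exact div_le_one_of_le₀ (by exact_mod_cast (card_filter_le _ _).trans (card_range n).le)
    n.cast_nonneg

lemma posDev_le_one (hp : ∀ j, 0 ≤ p j) (h01 : ∀ i j ω, X i j ω = 0 ∨ X i j ω = 1) (j : ℕ)
    (ω : Ω) : max (empMean n X j ω - p j) 0 ≤ 1 :=
  max_le (by linarith [empMean_le_one (n := n) h01 j ω, hp j]) zero_le_one

lemma bddAbove_range_posDev (hp : ∀ j, 0 ≤ p j) (h01 : ∀ i j ω, X i j ω = 0 ∨ X i j ω = 1)
    (ω : Ω) : BddAbove (Set.range fun j => max (empMean n X j ω - p j) 0) :=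
  ⟨1, Set.forall_mem_range.2 fun j => posDev_le_one hp h01 j ω⟩

lemma supPosDev_nonneg (hp : ∀ j, 0 ≤ p j) (h01 : ∀ i j ω, X i j ω = 0 ∨ X i j ω = 1)
    (ω : Ω) : 0 ≤ supPosDev n X p ω :=
  le_ciSup_of_le (bddAbove_range_posDev hp h01 ω) 0 (le_max_right _ _)

lemma supPosDev_le_one (hp : ∀ j, 0 ≤ p j) (h01 : ∀ i j ω, X i j ω = 0 ∨ X i j ω = 1)
    (ω : Ω) : supPosDev n X p ω ≤ 1 :=
  ciSup_le fun j => posDev_le_one hp h01 j ω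

lemma one_div_two_mul_le_supPosDev (hp0 : ∀ j, 0 ≤ p j) (hp : ∀ j, p j ≤ 1 / (2 * n))
    (h01 : ∀ i j ω, X i j ω = 0 ∨ X i j ω = 1) {i j : ℕ} {ω : Ω} (hi : i < n)
    (hij : X i j ω = 1) : 1 / (2 * n) ≤ supPosDev n X p ω := by
  have hn : (0 : ℝ) < n := by exact_mod_cast (Nat.zero_le i).trans_lt hi
  have hmean : 1 / (n : ℝ) ≤ empMean n X j ω := by
    rw [empMean, ← hij]
    gcongr
    exact single_le_sum (f := fun i => X i j ω)
      (fun i _ => by rcases h01 i j ω with h | h <;> simp [h]) (mem_range.2 hi)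
  refine le_ciSup_of_le (bddAbove_range_posDev hp0 h01 ω) j (le_max_of_le_left ?_)
  have : 1 / (n : ℝ) = 1 / (2 * n) + 1 / (2 * n) := by field_simp; norm_num
  linarith [hp j]

lemma supPosDev_le_sum_indicator_countAtLeast (hp : ∀ j, 0 ≤ p j)
    (h01 : ∀ i j ω, X i j ω = 0 ∨ X i j ω = 1) (ω : Ω) :
    supPosDev n X p ω
      ≤ (∑ k ∈ range n, (countAtLeast n X (k + 1)).indicator 1 ω) / n := by
  refine ciSup_le fun j => ?_
  set m := #{i ∈ range n | X i j ω = 1}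
  have hsum : ∑ i ∈ range n, X i j ω = m := sum_eq_card_filter_eq_one (fun i => h01 i j ω) _
  have hmn : m ≤ n := (card_filter_le _ _).trans (card_range n).le
  -- layer cake: `m` is the number of levels `k + 1 ≤ m`
  have hlayer : (m : ℝ) ≤ ∑ k ∈ range n, (countAtLeast n X (k + 1)).indicator 1 ω := by
    calc (m : ℝ) = ∑ k ∈ range m, (countAtLeast n X (k + 1)).indicator 1 ω := by
          rw [sum_congr rfl fun k hk => Set.indicator_of_mem
            (show ω ∈ countAtLeast n X (k + 1) from Set.mem_iUnion.2 ⟨j, ?_⟩) _]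
          · simp
          · change ((k + 1 : ℕ) : ℝ) ≤ _
            rw [hsum, Nat.cast_le]
            exact mem_range.1 hk
      _ ≤ _ := sum_le_sum_of_subset_of_nonneg (range_subset_range.2 hmn)
          fun k _ _ => Set.indicator_nonneg (fun _ _ => zero_le_one) ω
  refine max_le ?_ (div_nonneg ((Nat.cast_nonneg m).trans hlayer) n.cast_nonneg)
  calc empMean n X j ω - p j ≤ m / n := by rw [empMean, hsum]; linarith [hp j]
    _ ≤ _ := by gcongr

end Pointwise

section Estimates

variable {Ω : Type} [MeasurableSpace Ω] {P : Measure Ω} {X : ℕ → ℕ → Ω → ℝ} {p : ℕ → ℝ}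
  {n : ℕ}

lemma maxDevPlus_eq_integral_supPosDev :
    maxDevPlus n P X p = ∫ ω, supPosDev n X p ω ∂P := rfl

lemma measurable_supPosDev (hX : ∀ i j, Measurable (X i j)) :
    Measurable (supPosDev n X p) :=
  Measurable.iSup fun j =>
    (((Finset.measurable_sum _ fun i _ => hX i j).div_const _).sub_const _).max measurable_const

lemma integrable_supPosDev [IsFiniteMeasure P] (hX : IsBernoulliProduct P X p)
    (hp : ∀ j, 0 ≤ p j) : Integrable (supPosDev n X p) P := by
  refine (integrable_const (1 : ℝ)).mono' (measurable_supPosDev hX.measurable).aestronglyMeasurable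
    (ae_of_all _ fun ω => ?_)
  rw [Real.norm_eq_abs, abs_of_nonneg (supPosDev_nonneg hp hX.zero_or_one ω)]
  exact supPosDev_le_one hp hX.zero_or_one ω

lemma measurableSet_countAtLeast (hX : ∀ i j, Measurable (X i j)) (k : ℕ) :
    MeasurableSet (countAtLeast n X k) :=
  MeasurableSet.iUnion fun j =>
    measurableSet_le measurable_const (Finset.measurable_sum _ fun i _ => hX i j)

lemma maxDevPlus_le_sum_measureReal_countAtLeast [IsFiniteMeasure P]
    (hX : IsBernoulliProduct P X p) (hp : ∀ j, 0 ≤ p j) :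
    maxDevPlus n P X p ≤ (∑ k ∈ range n, P.real (countAtLeast n X (k + 1))) / n := by
  have hint : ∀ k, Integrable ((countAtLeast n X k).indicator (1 : Ω → ℝ)) P := fun k =>
    (integrable_const 1).indicator (measurableSet_countAtLeast hX.measurable k)
  rw [maxDevPlus_eq_integral_supPosDev]
  calc ∫ ω, supPosDev n X p ω ∂P
      ≤ ∫ ω, (∑ k ∈ range n, (countAtLeast n X (k + 1)).indicator 1 ω) / (n : ℝ) ∂P :=
        integral_mono_of_nonneg (ae_of_all _ (supPosDev_nonneg hp hX.zero_or_one))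
          ((integrable_finsetSum _ fun k _ => hint (k + 1)).div_const _)
          (ae_of_all _ (supPosDev_le_sum_indicator_countAtLeast hp hX.zero_or_one))
    _ = _ := by
        rw [integral_div, integral_finsetSum _ fun k _ => hint (k + 1)]
        simp_rw [integral_indicator_one (measurableSet_countAtLeast hX.measurable _)]

lemma measure_countAtLeast_le (hX : IsBernoulliProduct P X p) (k : ℕ) :
    P (countAtLeast n X k) ≤ ∑' j, ENNReal.ofReal (n * p j) ^ k := by
  refine (measure_iUnion_le _).trans (ENNReal.tsum_le_tsum fun j => ?_)
  rw [ENNReal.ofReal_mul n.cast_nonneg, ENNReal.ofReal_natCast]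
  exact measure_natCast_le_sum_le_pow (hX.iIndepFun_column j) (fun i => hX.zero_or_one i j)
    (fun i => hX.measure_eq_one i j) n k

lemma sum_measure_countAtLeast_le [IsProbabilityMeasure P] (hX : IsBernoulliProduct P X p)
    (hp : ∀ j, p j ≤ 1 / (2 * n * (j + 1))) :
    ∑ k ∈ range n, P (countAtLeast n X (k + 1))
      ≤ 2 * (1 ⊓ ∑' j, ENNReal.ofReal (n * p j)) := by
  set a := fun j => ENNReal.ofReal (n * p j)
  have ha' : ∀ j : ℕ, a j ≤ ENNReal.ofReal (1 / (2 * (j + 1))) := fun j =>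
    ENNReal.ofReal_le_ofReal (natCast_mul_le_one_div_two_mul_succ (hp j))
  have ha : ∀ j, a j ≤ 2⁻¹ := fun j => by
    refine (ha' j).trans ?_
    rw [← ENNReal.ofReal_ofNat 2, ← ENNReal.ofReal_inv_of_pos two_pos]
    refine ENNReal.ofReal_le_ofReal ?_
    rw [one_div]
    gcongr
    linarith [j.cast_nonneg (α := ℝ)]
  have ha2 : ∑' j, a j ^ 2 ≤ 2⁻¹ :=
    (ENNReal.tsum_le_tsum fun j => pow_le_pow_left' (ha' j) 2).trans tsum_inv_two_mul_succ_sq_le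
  calc ∑ k ∈ range n, P (countAtLeast n X (k + 1))
      ≤ ∑ k ∈ range n, 2⁻¹ ^ k * (1 ⊓ ∑' j, a j) := sum_le_sum fun k _ =>
        (le_inf prob_le_one (measure_countAtLeast_le hX _)).trans (tsum_pow_succ_le ha ha2 k)
    _ ≤ ∑' k, 2⁻¹ ^ k * (1 ⊓ ∑' j, a j) := ENNReal.sum_le_tsum _
    _ = 2 * (1 ⊓ ∑' j, a j) := by rw [ENNReal.tsum_mul_right, ENNReal.tsum_geometric_two]

lemma inf_tsum_ofReal_natCast_mul (hn : n ≠ 0) :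
    1 ⊓ ∑' j, ENNReal.ofReal (n * p j) = n * (1 / (n : ℝ≥0∞) ⊓ ∑' j, ENNReal.ofReal (p j)) := by
  rw [mul_min, ENNReal.mul_div_cancel (Nat.cast_ne_zero.2 hn) (ENNReal.natCast_ne_top n),
    ← ENNReal.tsum_mul_left]
  simp_rw [ENNReal.ofReal_mul n.cast_nonneg, ENNReal.ofReal_natCast]

lemma maxDevPlus_le_two_mul [IsProbabilityMeasure P] (hX : IsBernoulliProduct P X p)
    (hn : n ≠ 0) (hp0 : ∀ j, 0 ≤ p j) (hp : ∀ j, p j ≤ 1 / (2 * n * (j + 1))) :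
    maxDevPlus n P X p ≤ 2 * ((1 / (n : ℝ≥0∞)) ⊓ ∑' j, ENNReal.ofReal (p j)).toReal := by
  set M := (1 / (n : ℝ≥0∞)) ⊓ ∑' j, ENNReal.ofReal (p j)
  have hM : M ≠ ⊤ := ne_top_of_le_ne_top (by simpa using hn) inf_le_left
  have hsum : ∑ k ∈ range n, P (countAtLeast n X (k + 1)) ≤ 2 * (n * M) :=
    inf_tsum_ofReal_natCast_mul (p := p) hn ▸ sum_measure_countAtLeast_le hX hp
  refine (maxDevPlus_le_sum_measureReal_countAtLeast hX hp0).trans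
    (div_le_of_le_mul₀ n.cast_nonneg (by positivity) ?_)
  have := ENNReal.toReal_mono (by finiteness) hsum
  simpa [measureReal_def, ENNReal.toReal_sum, mul_comm, mul_left_comm] using this

lemma natCast_mul_sum_div_two_le_measureReal [IsProbabilityMeasure P]
    (hX : IsBernoulliProduct P X p) (hp0 : ∀ j, 0 ≤ p j) (hp1 : ∀ j, p j ≤ 1) {J : ℕ}
    (hs : n * ∑ j ∈ range J, p j ≤ 1) :
    (n * ∑ j ∈ range J, p j) / 2
      ≤ P.real (⋂ q ∈ range n ×ˢ range J, {ω | X q.1 q.2 ω = 0})ᶜ := by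
  set x := n * ∑ j ∈ range J, p j
  have hx : 0 ≤ x := mul_nonneg n.cast_nonneg (sum_nonneg fun j _ => hp0 j)
  have hmeas : MeasurableSet (⋂ q ∈ range n ×ˢ range J, {ω | X q.1 q.2 ω = 0}) :=
    Finset.measurableSet_biInter _ fun q _ => hX.measurable q.1 q.2 (measurableSet_singleton 0)
  have hzero : P.real (⋂ q ∈ range n ×ˢ range J, {ω | X q.1 q.2 ω = 0})
      = ∏ q ∈ range n ×ˢ range J, (1 - p q.2) := by
    rw [measureReal_def, hX.iIndepFun_uncurry.measure_biInter_eq,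
      prod_congr rfl fun q _ => hX.measure_eq_zero hp0 q.1 q.2,
      ← ENNReal.ofReal_prod_of_nonneg fun q _ => sub_nonneg.2 (hp1 q.2),
      ENNReal.toReal_ofReal (prod_nonneg fun q _ => sub_nonneg.2 (hp1 q.2))]
  have hprod : ∏ q ∈ range n ×ˢ range J, (1 - p q.2) ≤ (1 + x)⁻¹ := by
    have := prod_one_sub_le_inv_one_add_sum (range n ×ˢ range J) (a := fun q => p q.2)
      (fun q _ => hp0 q.2) (fun q _ => hp1 q.2)
    simpa [sum_product, x] using this
  have hx2 : x / 2 ≤ 1 - (1 + x)⁻¹ := by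
    rw [inv_eq_one_div, le_sub_iff_add_le, ← le_sub_iff_add_le', div_le_iff₀ (by positivity)]
    nlinarith
  rw [probReal_compl_eq_one_sub hmeas, hzero]
  linarith

lemma sum_range_div_four_le_maxDevPlus [IsProbabilityMeasure P] (hX : IsBernoulliProduct P X p)
    (hn : n ≠ 0)
    (hp0 : ∀ j, 0 ≤ p j) (hp : ∀ j, p j ≤ 1 / (2 * n)) {J : ℕ}
    (hs : ∑ j ∈ range J, p j ≤ 1 / n) : (∑ j ∈ range J, p j) / 4 ≤ maxDevPlus n P X p := by
  have hnR : (0 : ℝ) < n := by positivity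
  have hn1 : (1 : ℝ) ≤ n := Nat.one_le_cast.2 (Nat.one_le_iff_ne_zero.2 hn)
  have hp1 : ∀ j, p j ≤ 1 := fun j => (hp j).trans <| by
    rw [div_le_one (by positivity)]; linarith
  set G := (⋂ q ∈ range n ×ˢ range J, {ω | X q.1 q.2 ω = 0})ᶜ
  have hGmeas : MeasurableSet G := (Finset.measurableSet_biInter _ fun q _ =>
    hX.measurable q.1 q.2 (measurableSet_singleton 0)).compl
  have hG : G.indicator (fun _ => 1 / (2 * (n : ℝ))) ≤ supPosDev n X p := fun ω => by
    by_cases hω : ω ∈ G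
    · obtain ⟨⟨i, j⟩, hq, hne⟩ : ∃ q ∈ range n ×ˢ range J, X q.1 q.2 ω ≠ 0 := by
        simpa [G] using hω
      rw [Set.indicator_of_mem hω]
      exact one_div_two_mul_le_supPosDev hp0 hp hX.zero_or_one (mem_range.1 (mem_product.1 hq).1)
        ((hX.zero_or_one i j ω).resolve_left hne)
    · rw [Set.indicator_of_notMem hω]
      exact supPosDev_nonneg hp0 hX.zero_or_one ω
  have hPG := natCast_mul_sum_div_two_le_measureReal hX hp0 hp1 (J := J)
    (by rwa [← le_div_iff₀' hnR])
  calc (∑ j ∈ range J, p j) / 4 = 1 / (2 * n) * ((n * ∑ j ∈ range J, p j) / 2) := by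
        field_simp; ring
    _ ≤ 1 / (2 * n) * P.real G := by gcongr
    _ = ∫ ω, G.indicator (fun _ => 1 / (2 * (n : ℝ))) ω ∂P := by
        rw [integral_indicator_const _ hGmeas, smul_eq_mul, mul_comm]
    _ ≤ maxDevPlus n P X p :=
        integral_mono ((integrable_const _).indicator hGmeas) (integrable_supPosDev hX hp0) hG

lemma div_eight_le_maxDevPlus [IsProbabilityMeasure P] (hX : IsBernoulliProduct P X p)
    (hn : n ≠ 0) (hp0 : ∀ j, 0 ≤ p j) (hp : ∀ j, p j ≤ 1 / (2 * n)) :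
    ((1 / (n : ℝ≥0∞)) ⊓ ∑' j, ENNReal.ofReal (p j)).toReal / 8 ≤ maxDevPlus n P X p := by
  set M := (1 / (n : ℝ≥0∞)) ⊓ ∑' j, ENNReal.ofReal (p j)
  rcases eq_or_ne M 0 with hM0 | hM0
  · rw [hM0, ENNReal.toReal_zero, zero_div]
    exact integral_nonneg (supPosDev_nonneg hp0 hX.zero_or_one)
  have hn_top : 1 / (n : ℝ≥0∞) ≠ ⊤ := by simpa using hn
  have hMn : M.toReal ≤ 1 / n := by
    have := ENNReal.toReal_mono hn_top (inf_le_left : M ≤ 1 / (n : ℝ≥0∞))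
    rwa [ENNReal.toReal_div, ENNReal.toReal_one, ENNReal.toReal_natCast] at this
  have hMtop : M ≠ ⊤ := ne_top_of_le_ne_top hn_top inf_le_left
  obtain ⟨J, hJlo, hJhi⟩ := ENNReal.exists_sum_range_mem_Ioc
    (fun j => ENNReal.ofReal_le_ofReal (hp j))
    ((ENNReal.half_lt_self hM0 hMtop).trans_le inf_le_right)
  set s := ∑ j ∈ range J, p j
  have hs0 : 0 ≤ s := sum_nonneg fun j _ => hp0 j
  have hs : ∑ j ∈ range J, ENNReal.ofReal (p j) = ENNReal.ofReal s :=
    (ENNReal.ofReal_sum_of_nonneg fun j _ => hp0 j).symm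
  rw [hs] at hJlo hJhi
  have hMs : M.toReal / 2 < s := by
    have := (ENNReal.toReal_lt_toReal (by finiteness) ENNReal.ofReal_ne_top).2 hJlo
    rwa [ENNReal.toReal_div, ENNReal.toReal_ofNat, ENNReal.toReal_ofReal hs0] at this
  have hsn : s ≤ 1 / n := by
    have := ENNReal.toReal_mono (by finiteness) hJhi
    rw [ENNReal.toReal_ofReal hs0, ENNReal.toReal_add (by finiteness) ENNReal.ofReal_ne_top,
      ENNReal.toReal_div, ENNReal.toReal_ofNat, ENNReal.toReal_ofReal (by positivity)] at this
    have : (1 : ℝ) / (2 * n) = 1 / n / 2 := by ring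
    linarith
  linarith [sum_range_div_four_le_maxDevPlus hX hn hp0 hp hsn]

end Estimates

theorem stmt15 :
    ∃ c C : ℝ, 0 < c ∧ 0 < C ∧
      ∀ (n : ℕ), 1 ≤ n →
      ∀ p : ℕ → ℝ, IsProbSeq p →
        -- if p(j) ≤ 1/(2nj) for all j ≥ 1
        (∀ j : ℕ, p j ≤ 1 / (2 * n * (j + 1))) →
        ∀ (Ω : Type) [MeasurableSpace Ω] (P : Measure Ω) [IsProbabilityMeasure P]
          (X : ℕ → ℕ → Ω → ℝ), IsBernoulliProduct P X p →
          -- c·min(1/n, ∑ p(j)) ≤ Δ_n^+(p) ≤ C·min(1/n, ∑ p(j)), the min being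
          -- computed in ℝ≥0∞ so that a divergent sum is handled correctly
          c * ((1 / (n : ℝ≥0∞)) ⊓ ∑' j, ENNReal.ofReal (p j)).toReal ≤ maxDevPlus n P X p ∧
          maxDevPlus n P X p ≤ C * ((1 / (n : ℝ≥0∞)) ⊓ ∑' j, ENNReal.ofReal (p j)).toReal := by
  refine ⟨1 / 8, 2, by norm_num, by norm_num, fun n hn p hp hpn Ω _ P _ X hX => ?_⟩
  have hn0 : n ≠ 0 := Nat.one_le_iff_ne_zero.1 hn
  have hp0 : ∀ j, 0 ≤ p j := fun j => (hp.1 j).1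
  have hp' : ∀ j, p j ≤ 1 / (2 * n) := fun j => (hpn j).trans <|
    one_div_le_one_div_of_le (by positivity)
      (le_mul_of_one_le_right (by positivity) (by linarith [j.cast_nonneg (α := ℝ)]))
  exact ⟨by linarith [div_eight_le_maxDevPlus hX hn0 hp0 hp'],
    maxDevPlus_le_two_mul hX hn0 hp0 hpn⟩
end

section
/- Let 0 < q ≤ 1/4 and 0 ≤ ε ≤ 1/4 with ε ≥ 8q. Then (ε/2)·ln(ε/q) ≤ q·h(ε/q) ≤ D(q+ε ‖ q) ≤ 2ε·ln(ε/q). Moreover, for any 0 < q ≤ 1 and 0 ≤ ε ≤ 1 with q + ε ≤ 1/2, one has ε²/(2(q+ε)) ≤ q·h(ε/q) ≤ D(q+ε ‖ q) ≤ ε²/q. -/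
/-!
Write `p = q + ε`. Then `q·h(ε/q) = p·ln(p/q) − ε`, while `D(p ‖ q)` is `p·ln(p/q)` plus the
term `(1−p)·ln((1−p)/(1−q))`, which lies between `−ε` (by `ln x ≥ 1 − 1/x`) and `0`. This gives
the middle inequalities. The outer bounds come from elementary estimates on `ln`: the first two
terms of the series `−ln(1−t) = Σ tⁿ/n` for the lower bound `u²/(2(1+u)) ≤ h(u)` and for the
second term of `D`, the inequality `ln x ≤ sinh(ln x) = (x − 1/x)/2` for its first term, and,
when `ε/q ≥ 8 > e²`, the comparison of `(1+u)·ln(1+u)` with `u·ln u` up to a factor of two.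
-/

/-- The Kullback–Leibler divergence `D(a ‖ b)` between Bernoulli distributions with
parameters `a` and `b`. -/
noncomputable def klBern (a b : ℝ) : ℝ :=
  a * Real.log (a / b) + (1 - a) * Real.log ((1 - a) / (1 - b))

/-- `h(u) = (1+u)·ln(1+u) - u`. -/
noncomputable def hFun (u : ℝ) : ℝ := (1 + u) * Real.log (1 + u) - u

open Real

lemma add_sq_div_two_le_neg_log_one_sub {t : ℝ} (h0 : 0 ≤ t) (h1 : t < 1) :
    t + t ^ 2 / 2 ≤ -log (1 - t) := by
  have hseries := hasSum_pow_div_log_of_abs_lt_one (abs_lt.2 ⟨by linarith, h1⟩)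
  have := sum_le_hasSum (Finset.range 2) (fun n _ => by positivity) hseries
  norm_num [Finset.sum_range_succ] at this
  linarith

lemma log_le_sub_inv_div_two {x : ℝ} (hx : 1 ≤ x) : log x ≤ (x - x⁻¹) / 2 := by
  rw [← sinh_log (by positivity)]
  exact self_le_sinh_iff.2 (log_nonneg hx)

lemma sub_le_mul_log_div {a b : ℝ} (ha : 0 ≤ a) (hb : 0 < b) : a - b ≤ a * log (a / b) := by
  rcases ha.eq_or_lt with rfl | ha
  · simpa using hb.le
  have := one_sub_inv_le_log_of_pos (div_pos ha hb)
  rw [inv_div] at this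
  calc a - b = a * (1 - b / a) := by field_simp
    _ ≤ a * log (a / b) := by gcongr

lemma sq_div_two_mul_one_add_le_hFun {u : ℝ} (hu : 0 ≤ u) :
    u ^ 2 / (2 * (1 + u)) ≤ hFun u := by
  have hpos : 0 < 1 + u := by linarith
  have hlog := add_sq_div_two_le_neg_log_one_sub (t := u / (1 + u)) (by positivity)
    (by rw [div_lt_one hpos]; linarith)
  rw [show 1 - u / (1 + u) = (1 + u)⁻¹ by field_simp; ring, log_inv, neg_neg] at hlog
  calc u ^ 2 / (2 * (1 + u)) = (1 + u) * (u / (1 + u) + (u / (1 + u)) ^ 2 / 2) - u := by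
        field_simp; ring
    _ ≤ hFun u := by unfold hFun; gcongr

lemma mul_log_div_two_le_hFun {u : ℝ} (hu : exp 2 ≤ u) : u * log u / 2 ≤ hFun u := by
  have hpos : 0 < u := (exp_pos 2).trans_le hu
  have hlog : 2 ≤ log u := (le_log_iff_exp_le hpos).2 hu
  have hmono : u * log u ≤ (1 + u) * log (1 + u) := by
    gcongr <;> linarith
  unfold hFun
  nlinarith

lemma one_add_mul_log_one_add_le_two_mul_mul_log {u : ℝ} (hu : exp 1 ≤ u) :
    (1 + u) * log (1 + u) ≤ 2 * u * log u := by
  have hpos : 0 < u := (exp_pos 1).trans_le hu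
  have hlog : 1 ≤ log u := (le_log_iff_exp_le hpos).2 hu
  have hu2 : 5 / 2 ≤ u := by linarith [exp_one_gt_d9]
  have hinv : u⁻¹ ≤ 1 / 2 := by rw [inv_le_comm₀ hpos (by norm_num)]; linarith
  have hstep : log (1 + u) ≤ log u + u⁻¹ := by
    have := log_le_sub_one_of_pos (x := (1 + u) / u) (by positivity)
    rw [log_div (by positivity) hpos.ne'] at this
    have : (1 + u) / u - 1 = u⁻¹ := by field_simp; ring
    linarith
  calc (1 + u) * log (1 + u) ≤ (1 + u) * (log u + u⁻¹) := by gcongr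
    _ = (1 + u) * log u + (1 + u⁻¹) := by field_simp; ring
    _ ≤ 2 * u * log u := by
      nlinarith [mul_le_mul_of_nonneg_left hlog (by linarith : 0 ≤ u - 1)]

lemma mul_hFun_div_eq {q ε : ℝ} (hq : q ≠ 0) :
    q * hFun (ε / q) = (q + ε) * log ((q + ε) / q) - ε := by
  rw [hFun, show 1 + ε / q = (q + ε) / q by field_simp]
  field_simp

lemma klBern_add_le_mul_log_div {q ε : ℝ} (hε : 0 ≤ ε) (hp : q + ε ≤ 1) :
    klBern (q + ε) q ≤ (q + ε) * log ((q + ε) / q) := by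
  have : (1 - (q + ε)) * log ((1 - (q + ε)) / (1 - q)) ≤ 0 :=
    mul_nonpos_of_nonneg_of_nonpos (by linarith)
      (log_nonpos (div_nonneg (by linarith) (by linarith))
        (div_le_one_of_le₀ (by linarith) (by linarith)))
  unfold klBern
  linarith

lemma mul_hFun_div_le_klBern {q ε : ℝ} (hq : 0 < q) (hq1 : q < 1) (hp : q + ε ≤ 1) :
    q * hFun (ε / q) ≤ klBern (q + ε) q := by
  have := sub_le_mul_log_div (a := 1 - (q + ε)) (b := 1 - q) (by linarith) (by linarith)
  rw [mul_hFun_div_eq hq.ne', klBern]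
  linarith

lemma klBern_add_le_sq_div {q ε : ℝ} (hq : 0 < q) (hε : 0 ≤ ε) (hp : q + ε ≤ 1 / 2) :
    klBern (q + ε) q ≤ ε ^ 2 / q := by
  set v := ε / (1 - q) with hv
  have hq1 : 0 < 1 - q := by linarith
  have hfirst : (q + ε) * log ((q + ε) / q) ≤ ε + ε ^ 2 / (2 * q) :=
    calc (q + ε) * log ((q + ε) / q) ≤ (q + ε) * (((q + ε) / q - ((q + ε) / q)⁻¹) / 2) :=
          mul_le_mul_of_nonneg_left (log_le_sub_inv_div_two (by rw [le_div_iff₀ hq]; linarith))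
            (by linarith)
      _ = ε + ε ^ 2 / (2 * q) := by field_simp; ring
  have hsecond :
      (1 - (q + ε)) * log ((1 - (q + ε)) / (1 - q)) ≤ -((1 - (q + ε)) * (v + v ^ 2 / 2)) := by
    have hlog := add_sq_div_two_le_neg_log_one_sub (t := v) (by positivity)
      (by rw [hv, div_lt_one hq1]; linarith)
    rw [show 1 - v = (1 - (q + ε)) / (1 - q) by rw [hv]; field_simp; ring] at hlog
    nlinarith
  have hgap : ε + ε ^ 2 / (2 * q) - (1 - (q + ε)) * (v + v ^ 2 / 2) ≤ ε ^ 2 / q := by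
    have hid : ε ^ 2 / q - (ε + ε ^ 2 / (2 * q) - (1 - (q + ε)) * (v + v ^ 2 / 2))
        = ε ^ 2 * ((1 - q) * (1 - 2 * q) - q * ε) / (2 * q * (1 - q) ^ 2) := by
      rw [hv]; field_simp; ring
    have : 0 ≤ (1 - q) * (1 - 2 * q) - q * ε := by nlinarith
    have : 0 ≤ ε ^ 2 * ((1 - q) * (1 - 2 * q) - q * ε) / (2 * q * (1 - q) ^ 2) := by positivity
    linarith
  unfold klBern
  linarith

theorem stmt16 :
    (∀ q ε : ℝ, 0 < q → q ≤ 1 / 4 → 0 ≤ ε → ε ≤ 1 / 4 → 8 * q ≤ ε →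
      ε / 2 * Real.log (ε / q) ≤ q * hFun (ε / q) ∧
      q * hFun (ε / q) ≤ klBern (q + ε) q ∧
      klBern (q + ε) q ≤ 2 * ε * Real.log (ε / q)) ∧
    (∀ q ε : ℝ, 0 < q → q ≤ 1 → 0 ≤ ε → ε ≤ 1 → q + ε ≤ 1 / 2 →
      ε ^ 2 / (2 * (q + ε)) ≤ q * hFun (ε / q) ∧
      q * hFun (ε / q) ≤ klBern (q + ε) q ∧
      klBern (q + ε) q ≤ ε ^ 2 / q) := by
  have exp_two_lt_eight : exp 2 < 8 := by
    have := exp_one_lt_d9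
    rw [show (2 : ℝ) = 1 + 1 by norm_num, exp_add]
    nlinarith [exp_pos 1]
  refine ⟨fun q ε hq _ hε hε4 h8 => ?_, fun q ε hq _ hε _ hp => ?_⟩
  · have hu : 8 ≤ ε / q := by rwa [le_div_iff₀ hq]
    refine ⟨?_, mul_hFun_div_le_klBern hq (by linarith) (by linarith), ?_⟩
    · calc ε / 2 * log (ε / q) = q * (ε / q * log (ε / q) / 2) := by field_simp
        _ ≤ q * hFun (ε / q) := by gcongr q * ?_; exact mul_log_div_two_le_hFun (by linarith)
    · calc klBern (q + ε) q ≤ (q + ε) * log ((q + ε) / q) :=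
            klBern_add_le_mul_log_div hε (by linarith)
        _ = q * ((1 + ε / q) * log (1 + ε / q)) := by
          rw [show 1 + ε / q = (q + ε) / q by field_simp]; field_simp
        _ ≤ q * (2 * (ε / q) * log (ε / q)) := by
          gcongr q * ?_
          exact one_add_mul_log_one_add_le_two_mul_mul_log (by linarith [exp_one_lt_three])
        _ = 2 * ε * log (ε / q) := by field_simp
  · refine ⟨?_, mul_hFun_div_le_klBern hq (by linarith) (by linarith),
      klBern_add_le_sq_div hq hε hp⟩
    calc ε ^ 2 / (2 * (q + ε)) = q * ((ε / q) ^ 2 / (2 * (1 + ε / q))) := by field_simp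
      _ ≤ q * hFun (ε / q) := by
        gcongr q * ?_; exact sq_div_two_mul_one_add_le_hFun (by positivity)
end

section
/- For all 0 ≤ ε ≤ 1/2 and 0 < q ≤ 1/2, one has q·h(ε/q) ≥ D(q + ε/2 ‖ q). -/
/-!
The gap `F(t) = q·h(t/q) - D(q + t/2 ‖ q)` vanishes at `t = 0`, and for `0 ≤ t ≤ 1/2` its
derivative `log(1 + t/q) - ½·log((q + t/2)(1 - q) / (q(1 - q - t/2)))` is nonnegative. After
exponentiating and clearing denominators, this becomes the polynomial inequality
`q(q + t/2)(1 - q) ≤ (q + t)²(1 - q - t/2)`, whose two sides differ by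
`t·(3q/2 - 2q² + (1 - 2q)t - t²/2)`, and this bracket is nonnegative when `q, t ≤ 1/2`.
-/

open Set Real

lemma klBern_self (p : ℝ) : klBern p p = 0 := by
  rcases eq_or_ne p 0 with rfl | hp
  · simp [klBern]
  rcases eq_or_ne (1 - p) 0 with hp' | hp'
  · simp [klBern, hp']
  simp [klBern, div_self hp, div_self hp']

lemma hFun_zero : hFun 0 = 0 := by
  simp [hFun]

lemma hasDerivAt_hFun {u : ℝ} (hu : 1 + u ≠ 0) : HasDerivAt hFun (log (1 + u)) u := by
  have hlin : HasDerivAt (fun x => 1 + x) 1 u := (hasDerivAt_id u).const_add 1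
  refine ((hlin.mul (hlin.log hu)).sub (hasDerivAt_id u)).congr_deriv ?_
  field_simp
  ring

lemma hasDerivAt_klBern_left {a b : ℝ} (ha : a ≠ 0) (ha' : 1 - a ≠ 0) (hb : b ≠ 0)
    (hb' : 1 - b ≠ 0) :
    HasDerivAt (fun x => klBern x b) (log (a / b) - log ((1 - a) / (1 - b))) a := by
  have hdiv : HasDerivAt (fun x => x / b) (1 / b) a := (hasDerivAt_id a).div_const b
  have hsub : HasDerivAt (fun x => 1 - x) (-1) a := (hasDerivAt_id a).const_sub 1
  have hsub_div : HasDerivAt (fun x => (1 - x) / (1 - b)) (-1 / (1 - b)) a := hsub.div_const _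
  refine (((hasDerivAt_id' a).mul (hdiv.log (div_ne_zero ha hb))).add
    (hsub.mul (hsub_div.log (div_ne_zero ha' hb')))).congr_deriv ?_
  field_simp
  ring

lemma log_ratio_sub_le {q t : ℝ} (hq0 : 0 < q) (hq1 : q ≤ 1 / 2) (ht0 : 0 ≤ t)
    (ht1 : t ≤ 1 / 2) :
    log ((q + t / 2) / q) - log ((1 - (q + t / 2)) / (1 - q)) ≤ 2 * log (1 + t / q) := by
  have hbracket : 0 ≤ 3 * q / 2 - 2 * q ^ 2 + (1 - 2 * q) * t - t ^ 2 / 2 := by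
    nlinarith [mul_nonneg ht0 (sub_nonneg.2 hq1)]
  have hpoly : q * (q + t / 2) * (1 - q) ≤ (q + t) ^ 2 * (1 - (q + t / 2)) := by
    nlinarith [mul_nonneg ht0 hbracket]
  have h1q : 0 < 1 - q := by linarith
  have h1qt : 0 < 1 - (q + t / 2) := by linarith
  rw [← log_div (by positivity) (by positivity), ← log_rpow (by positivity),
    log_le_log_iff (by positivity) (by positivity), rpow_two, div_div_eq_mul_div,
    div_le_iff₀ (by positivity)]
  have hlhs : (q + t / 2) / q * (1 - q) = q * (q + t / 2) * (1 - q) / q ^ 2 := by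
    field_simp
  have hrhs : (1 + t / q) ^ 2 * (1 - (q + t / 2)) = (q + t) ^ 2 * (1 - (q + t / 2)) / q ^ 2 := by
    field_simp
  rw [hlhs, hrhs]
  gcongr

lemma monotoneOn_hFun_sub_klBern {q : ℝ} (hq0 : 0 < q) (hq1 : q ≤ 1 / 2) :
    MonotoneOn (fun t => q * hFun (t / q) - klBern (q + t / 2) q) (Icc 0 (1 / 2)) := by
  have hderiv : ∀ t ∈ Icc (0 : ℝ) (1 / 2),
      HasDerivAt (fun t => q * hFun (t / q) - klBern (q + t / 2) q)
        (log (1 + t / q) - (log ((q + t / 2) / q) - log ((1 - (q + t / 2)) / (1 - q))) / 2) t := by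
    rintro t ⟨ht0, ht1⟩
    have hh := (hasDerivAt_hFun (u := t / q) (by positivity)).comp t
      ((hasDerivAt_id t).div_const q)
    have hk := (hasDerivAt_klBern_left (a := q + t / 2) (b := q) (by positivity) (by linarith)
      hq0.ne' (by linarith)).comp t (((hasDerivAt_id t).div_const 2).const_add q)
    refine ((hh.const_mul q).sub hk).congr_deriv ?_
    field_simp
  refine monotoneOn_of_hasDerivWithinAt_nonneg (convex_Icc _ _)
    (fun t ht => (hderiv t ht).continuousAt.continuousWithinAt)
    (fun t ht => (hderiv t (interior_subset ht)).hasDerivWithinAt) fun t ht => ?_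
  obtain ⟨ht0, ht1⟩ := interior_subset ht
  linarith [log_ratio_sub_le hq0 hq1 ht0 ht1]

theorem stmt17 (q ε : ℝ) (hε0 : 0 ≤ ε) (hε1 : ε ≤ 1 / 2) (hq0 : 0 < q) (hq1 : q ≤ 1 / 2) :
    klBern (q + ε / 2) q ≤ q * hFun (ε / q) := by
  have h := monotoneOn_hFun_sub_klBern hq0 hq1 (by norm_num) ⟨hε0, hε1⟩ hε0
  simp only [zero_div, add_zero, hFun_zero, klBern_self, mul_zero, sub_zero] at h
  linarith
end
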